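/- Let M be a perfect matching of a connected graph G with af(G,M) = Af(G), and let e = uv be an edge of G not in M. Let G_e be the graph obtained from G by deleting the edge e, adding four new vertices w₁, w₂, w₃, w₄, and adding the edges uw₁, w₁w₂, w₂w₃, w₃w₄, w₄v and w₁w₄. Then gf(G_e) = gf(G) + 1 and Af(G_e) = Af(G) + 1. -/

import Mathlib

/-!
Sending `uv` to `uw₁` and every other edge of `G` to itself embeds `E(G)` into `E(G_e)`, leaving
the five edges `w₁w₂, w₂w₃, w₃w₄, w₄v, w₁w₄`. The perfect matchings of `G_e` are exactly the lifts
of the perfect matchings `N` of `G`, completed by `{w₁w₂, w₃w₄}` or `{w₂w₃, w₁w₄}` if `uv ∉ N` and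
by `{w₂w₃, w₄v}` if `uv ∈ N`. So a global forcing set, or an anti-forcing set, of `G` lifts to one
of `G_e` after adding one square edge. Conversely, if `S'` is one for `G_e` (in the anti-forcing
case, for the lift of `M` through `{w₂w₃, w₁w₄}`), then its preimage `S₀` together with `uv` is one
for `G`, and `S'` has an edge outside the image, because the two completions of `M` must be told
apart. If `S₀` alone fails, some two perfect matchings of `G` are separated only by `uv`, and then
`S'` needs two edges outside the image. With `af(G, M) = Af(G)` both numbers go up by exactly one.
-/

/-- `M` is a perfect matching of `G`, regarded as a set of edges: every edge of `M` is an
edge of `G` and every vertex lies in exactly one edge of `M`. -/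
def IsPM {V : Type*} (G : SimpleGraph V) (M : Set (Sym2 V)) : Prop :=
  M ⊆ G.edgeSet ∧ ∀ w : V, ∃! e, e ∈ M ∧ w ∈ e

/-- A graph is matchable if it has a perfect matching. -/
def Matchable {V : Type*} (G : SimpleGraph V) : Prop :=
  ∃ M, IsPM G M

/-- A global forcing set of `G`: a set `S` of edges of `G` distinguishing all
perfect matchings of `G`. -/
def IsGlobalForcingSet {V : Type*} (G : SimpleGraph V) (S : Set (Sym2 V)) : Prop :=
  S ⊆ G.edgeSet ∧
    ∀ M₁ M₂, IsPM G M₁ → IsPM G M₂ → M₁ ≠ M₂ → S ∩ M₁ ≠ S ∩ M₂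

/-- The global forcing number: the minimum cardinality of a global forcing set. -/
noncomputable def gf {V : Type*} (G : SimpleGraph V) : ℕ :=
  sInf {n | ∃ S, IsGlobalForcingSet G S ∧ S.ncard = n}

/-- An anti-forcing set of a perfect matching `M` of `G`: a set `S` of edges of `G`
disjoint from `M` such that `M` is the unique perfect matching of `G - S`. -/
def IsAntiForcingSet {V : Type*} (G : SimpleGraph V) (M S : Set (Sym2 V)) : Prop :=
  S ⊆ G.edgeSet ∧ S ∩ M = ∅ ∧ IsPM (G.deleteEdges S) M ∧
    ∀ M', IsPM (G.deleteEdges S) M' → M' = M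

/-- The anti-forcing number of a perfect matching `M` of `G`. -/
noncomputable def af {V : Type*} (G : SimpleGraph V) (M : Set (Sym2 V)) : ℕ :=
  sInf {n | ∃ S, IsAntiForcingSet G M S ∧ S.ncard = n}

/-- The maximum anti-forcing number of `G`. -/
noncomputable def Af {V : Type*} (G : SimpleGraph V) : ℕ :=
  sSup {n | ∃ M, IsPM G M ∧ af G M = n}

/-- The graph `G_e` obtained from `G` by deleting the edge `e = uv`, adding four new
vertices `w₁, w₂, w₃, w₄` and adding the edges `uw₁, w₁w₂, w₂w₃, w₃w₄, w₄v, w₁w₄`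
(the new vertices `w₁, w₂, w₃, w₄` are `Sum.inr 0, …, Sum.inr 3`). -/
def addSquare {V : Type*} (G : SimpleGraph V) (u v : V) : SimpleGraph (V ⊕ Fin 4) :=
  SimpleGraph.fromEdgeSet
    ((Sym2.map Sum.inl '' (G.edgeSet \ {s(u, v)})) ∪
      {s(Sum.inl u, Sum.inr 0), s(Sum.inr 0, Sum.inr 1), s(Sum.inr 1, Sum.inr 2),
       s(Sum.inr 2, Sum.inr 3), s(Sum.inr 3, Sum.inl v), s(Sum.inr 0, Sum.inr 3)})

section Generic

variable {α : Type*} {G : SimpleGraph α} {M N S : Set (Sym2 α)}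

theorem IsPM.exists_mem (hM : IsPM G M) (w : α) : ∃ e ∈ M, w ∈ e :=
  let ⟨e, he, _⟩ := hM.2 w
  ⟨e, he⟩

theorem IsPM.eq_of_mem (hM : IsPM G M) {e₁ e₂ : Sym2 α} {w : α} (h₁ : e₁ ∈ M) (h₂ : e₂ ∈ M)
    (hw₁ : w ∈ e₁) (hw₂ : w ∈ e₂) : e₁ = e₂ :=
  (hM.2 w).unique ⟨h₁, hw₁⟩ ⟨h₂, hw₂⟩

theorem IsPM.notMem_of_mem (hM : IsPM G M) {e₁ e₂ : Sym2 α} {w : α} (h₁ : e₁ ∈ M)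
    (hw₁ : w ∈ e₁) (hw₂ : w ∈ e₂) (hne : e₁ ≠ e₂) : e₂ ∉ M :=
  fun h₂ => hne (hM.eq_of_mem h₁ h₂ hw₁ hw₂)

theorem isPM_iff : IsPM G M ↔ M ⊆ G.edgeSet ∧ (∀ w, ∃ e ∈ M, w ∈ e) ∧
    ∀ e₁ ∈ M, ∀ e₂ ∈ M, ∀ w ∈ e₁, w ∈ e₂ → e₁ = e₂ := by
  refine ⟨fun hM => ⟨hM.1, hM.exists_mem, fun _ h₁ _ h₂ _ hw₁ hw₂ => hM.eq_of_mem h₁ h₂ hw₁ hw₂⟩,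
    fun ⟨hE, hcov, huniq⟩ => ⟨hE, fun w => ?_⟩⟩
  obtain ⟨e, he, hw⟩ := hcov w
  exact ⟨e, ⟨he, hw⟩, fun e' ⟨he', hw'⟩ => huniq e' he' e he w hw' hw⟩

theorem IsPM.eq_of_subset {H : SimpleGraph α} (hM : IsPM G M) (hN : IsPM H N) (hNM : N ⊆ M) :
    N = M := by
  refine hNM.antisymm fun e he => ?_
  obtain ⟨e', he', hw⟩ := hN.exists_mem (Quot.out e).1
  rwa [hM.eq_of_mem (hNM he') he hw (Sym2.out_fst_mem e)] at he'

theorem isPM_deleteEdges_iff : IsPM (G.deleteEdges S) M ↔ IsPM G M ∧ Disjoint M S := by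
  simp only [IsPM, SimpleGraph.edgeSet_deleteEdges, Set.subset_sdiff]
  tauto

theorem isGlobalForcingSet_edgeSet (G : SimpleGraph α) : IsGlobalForcingSet G G.edgeSet := by
  refine ⟨subset_rfl, fun M₁ M₂ h₁ h₂ hne heq => hne ?_⟩
  rwa [Set.inter_eq_right.2 h₁.1, Set.inter_eq_right.2 h₂.1] at heq

theorem gf_le_ncard (h : IsGlobalForcingSet G S) : gf G ≤ S.ncard :=
  Nat.sInf_le ⟨S, h, rfl⟩

theorem exists_isGlobalForcingSet_ncard_eq_gf (G : SimpleGraph α) :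
    ∃ S, IsGlobalForcingSet G S ∧ S.ncard = gf G :=
  Nat.sInf_mem (s := {n | ∃ S, IsGlobalForcingSet G S ∧ S.ncard = n})
    ⟨_, _, isGlobalForcingSet_edgeSet G, rfl⟩

theorem isAntiForcingSet_iff : IsAntiForcingSet G M S ↔ S ⊆ G.edgeSet ∧ IsPM G M ∧
    Disjoint S M ∧ ∀ M', IsPM G M' → Disjoint M' S → M' = M := by
  simp only [IsAntiForcingSet, isPM_deleteEdges_iff, ← Set.disjoint_iff_inter_eq_empty,
    disjoint_comm (a := M)]
  tauto

theorem isAntiForcingSet_edgeSet_diff (hM : IsPM G M) :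
    IsAntiForcingSet G M (G.edgeSet \ M) := by
  refine isAntiForcingSet_iff.2 ⟨Set.sdiff_subset, hM, Set.disjoint_sdiff_left,
    fun M' hM' hdisj => hM.eq_of_subset hM' fun e he => ?_⟩
  by_contra heM
  exact Set.disjoint_left.1 hdisj he ⟨hM'.1 he, heM⟩

theorem af_le_ncard (h : IsAntiForcingSet G M S) : af G M ≤ S.ncard :=
  Nat.sInf_le ⟨S, h, rfl⟩

theorem exists_isAntiForcingSet_ncard_eq_af (hM : IsPM G M) :
    ∃ S, IsAntiForcingSet G M S ∧ S.ncard = af G M :=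
  Nat.sInf_mem (s := {n | ∃ S, IsAntiForcingSet G M S ∧ S.ncard = n})
    ⟨_, _, isAntiForcingSet_edgeSet_diff hM, rfl⟩

theorem af_le_Af [Finite α] (hM : IsPM G M) : af G M ≤ Af G := by
  refine le_csSup ⟨G.edgeSet.ncard, ?_⟩ ⟨M, hM, rfl⟩
  rintro n ⟨N, hN, rfl⟩
  exact (af_le_ncard (isAntiForcingSet_edgeSet_diff hN)).trans
    (Set.ncard_le_ncard Set.sdiff_subset (Set.toFinite _))

theorem Af_le {k : ℕ} (h : ∀ N, IsPM G N → af G N ≤ k) : Af G ≤ k :=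
  csSup_le' fun _ ⟨N, hN, hn⟩ => hn ▸ h N hN

end Generic

theorem Set.two_le_ncard_of_pairwise_ne {α : Type*} {T A B C : Set α} (hT : T.Finite)
    (hA : A ⊆ T) (hB : B ⊆ T) (hC : C ⊆ T) (hAB : A ≠ B) (hAC : A ≠ C) (hBC : B ≠ C) :
    2 ≤ T.ncard := by
  by_contra! h
  have hsub : ∀ X ⊆ T, X = ∅ ∨ X = T := fun X hX => by
    refine X.eq_empty_or_nonempty.imp_right fun ⟨x, hx⟩ => hX.antisymm fun t ht => ?_
    rwa [(Set.ncard_le_one hT).1 (by omega) t ht x (hX hx)]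
  rcases hsub A hA with rfl | rfl <;> rcases hsub B hB with rfl | rfl <;>
    rcases hsub C hC with rfl | rfl <;> contradiction

theorem Set.ncard_eq_ncard_preimage_add_ncard_diff_range {α β : Type*} {g : α → β}
    (hg : g.Injective) {S : Set β} (hS : S.Finite) :
    S.ncard = (g ⁻¹' S).ncard + (S \ Set.range g).ncard := by
  rw [← Set.ncard_image_of_injective _ hg, Set.image_preimage_eq_inter_range,
    Set.ncard_inter_add_ncard_sdiff_eq_ncard S _ hS]

theorem Set.ncard_pos_of_ne {α : Type*} {T A B : Set α} (hT : T.Finite) (hA : A ⊆ T)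
    (hB : B ⊆ T) (hAB : A ≠ B) : 0 < T.ncard := by
  refine (Set.ncard_pos hT).2 (Set.nonempty_iff_ne_empty.2 fun h => hAB ?_)
  subst h
  rw [Set.subset_empty_iff.1 hA, Set.subset_empty_iff.1 hB]

namespace AddSquare

variable {V : Type*} {G : SimpleGraph V} {u v x : V} {f f₁ f₂ : Sym2 V}
  {M N N₁ N₂ S : Set (Sym2 V)} {R R₁ R₂ T M' S' : Set (Sym2 (V ⊕ Fin 4))}

-- `uv` itself is not an edge of `G_e`; it is represented by `uw₁`.
open Classical in
noncomputable def liftEdge (u v : V) (f : Sym2 V) : Sym2 (V ⊕ Fin 4) :=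
  if f = s(u, v) then s(Sum.inl u, Sum.inr 0) else Sym2.map Sum.inl f

def extraEdges (v : V) : Set (Sym2 (V ⊕ Fin 4)) :=
  {s(Sum.inr 0, Sum.inr 1), s(Sum.inr 1, Sum.inr 2), s(Sum.inr 2, Sum.inr 3),
    s(Sum.inr 3, Sum.inl v), s(Sum.inr 0, Sum.inr 3)}

theorem liftEdge_self : liftEdge u v s(u, v) = s(Sum.inl u, Sum.inr 0) := if_pos rfl

theorem liftEdge_of_ne (hf : f ≠ s(u, v)) : liftEdge u v f = Sym2.map Sum.inl f := if_neg hf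

theorem inr_mem_liftEdge {i : Fin 4} : Sum.inr i ∈ liftEdge u v f ↔ f = s(u, v) ∧ i = 0 := by
  by_cases hf : f = s(u, v)
  · simp [hf, liftEdge_self]
  · simp [hf, liftEdge_of_ne, Sym2.mem_map]

theorem inl_mem_liftEdge : Sum.inl x ∈ liftEdge u v f ↔ x ∈ f ∧ (f = s(u, v) → x = u) := by
  by_cases hf : f = s(u, v)
  · subst hf; simp +contextual [liftEdge_self]
  · simp [hf, liftEdge_of_ne, Sym2.mem_map]

theorem liftEdge_injective : Function.Injective (liftEdge u v) := by
  intro f₁ f₂ h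
  have h₀ : f₁ = s(u, v) ↔ f₂ = s(u, v) := by
    simpa [inr_mem_liftEdge] using congrArg (Sum.inr 0 ∈ ·) h
  by_cases h₁ : f₁ = s(u, v)
  · rw [h₁, h₀.1 h₁]
  · rw [liftEdge_of_ne h₁, liftEdge_of_ne (h₀.not.1 h₁)] at h
    exact Sym2.map.injective Sum.inl_injective h

theorem liftEdge_notMem_extraEdges : liftEdge u v f ∉ extraEdges v := by
  intro h
  have : Sum.inr 1 ∈ liftEdge u v f ∨ Sum.inr 3 ∈ liftEdge u v f := by
    simp only [extraEdges, Set.mem_insert_iff, Set.mem_singleton_iff] at h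
    rcases h with h | h | h | h | h <;> simp [h]
  simp [inr_mem_liftEdge] at this

theorem image_liftEdge_edgeSet (huv : G.Adj u v) :
    liftEdge u v '' G.edgeSet =
      Sym2.map Sum.inl '' (G.edgeSet \ {s(u, v)}) ∪ {s(Sum.inl u, Sum.inr 0)} := by
  ext e
  constructor
  · rintro ⟨f, hf, rfl⟩
    by_cases hfuv : f = s(u, v)
    · exact Or.inr (hfuv ▸ liftEdge_self)
    · exact Or.inl ⟨f, ⟨hf, hfuv⟩, (liftEdge_of_ne hfuv).symm⟩
  · rintro (⟨f, ⟨hf, hfuv⟩, rfl⟩ | rfl)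
    · exact ⟨f, hf, liftEdge_of_ne hfuv⟩
    · exact ⟨_, huv, liftEdge_self⟩

theorem edgeSet_addSquare (huv : G.Adj u v) :
    (addSquare G u v).edgeSet = liftEdge u v '' G.edgeSet ∪ extraEdges v := by
  rw [addSquare, SimpleGraph.edgeSet_fromEdgeSet, image_liftEdge_edgeSet huv,
    sdiff_eq_self_iff_disjoint.2]
  · simp only [extraEdges, Set.union_assoc, Set.singleton_union]
  rw [Set.disjoint_right]
  rintro e (⟨f, ⟨hf, -⟩, rfl⟩ | he) hdiag
  · exact G.not_isDiag_of_mem_edgeSet hf ((Sym2.isDiag_map Sum.inl_injective).1 hdiag)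
  · simp only [Set.mem_insert_iff, Set.mem_singleton_iff] at he
    rcases he with rfl | rfl | rfl | rfl | rfl | rfl <;> simp at hdiag

theorem liftEdge_mem_edgeSet_iff (huv : G.Adj u v) :
    liftEdge u v f ∈ (addSquare G u v).edgeSet ↔ f ∈ G.edgeSet := by
  rw [edgeSet_addSquare huv, Set.mem_union, liftEdge_injective.mem_set_image]
  simp [liftEdge_notMem_extraEdges]

/- A perfect matching `M'` of `G_e` is `lift u v N R` for its preimage `N` and its trace `R` on
`extraEdges v`, where `R` is `partA` or `partB` (the two perfect matchings of the square
`w₁w₂w₃w₄`) if `uv ∉ N`, and `R = partC v = {w₂w₃, w₄v}` if `uv ∈ N`, that is, if `uw₁ ∈ M'`. -/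
def partA : Set (Sym2 (V ⊕ Fin 4)) := {s(Sum.inr 0, Sum.inr 1), s(Sum.inr 2, Sum.inr 3)}

def partB : Set (Sym2 (V ⊕ Fin 4)) := {s(Sum.inr 1, Sum.inr 2), s(Sum.inr 0, Sum.inr 3)}

def partC (v : V) : Set (Sym2 (V ⊕ Fin 4)) := {s(Sum.inr 1, Sum.inr 2), s(Sum.inr 3, Sum.inl v)}

def IsSquarePart (u v : V) (N : Set (Sym2 V)) (R : Set (Sym2 (V ⊕ Fin 4))) : Prop :=
  s(u, v) ∉ N ∧ (R = partA ∨ R = partB) ∨ s(u, v) ∈ N ∧ R = partC v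

def lift (u v : V) (N : Set (Sym2 V)) (R : Set (Sym2 (V ⊕ Fin 4))) : Set (Sym2 (V ⊕ Fin 4)) :=
  liftEdge u v '' N ∪ R

theorem partA_subset_extraEdges : partA ⊆ extraEdges v := by
  simp [partA, extraEdges, Set.insert_subset_iff]

theorem partB_subset_extraEdges : partB ⊆ extraEdges v := by
  simp [partB, extraEdges, Set.insert_subset_iff]

theorem partC_subset_extraEdges : partC v ⊆ extraEdges v := by
  simp [partC, extraEdges, Set.insert_subset_iff]

theorem partA_ne_partB : (partA : Set (Sym2 (V ⊕ Fin 4))) ≠ partB := by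
  intro h
  have : s(Sum.inr 0, Sum.inr 1) ∈ (partB : Set (Sym2 (V ⊕ Fin 4))) := h ▸ by simp [partA]
  simp [partB] at this

theorem disjoint_partA_partC : Disjoint partA (partC v) := by
  simp [partA, partC]

theorem IsSquarePart.subset_extraEdges (hR : IsSquarePart u v N R) : R ⊆ extraEdges v := by
  rcases hR with ⟨-, rfl | rfl⟩ | ⟨-, rfl⟩
  exacts [partA_subset_extraEdges, partB_subset_extraEdges, partC_subset_extraEdges]

theorem IsSquarePart.eq_of_mem_iff (h₁ : IsSquarePart u v N R₁) (h₂ : IsSquarePart u v N R₂)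
    (h : s(Sum.inr 0, Sum.inr 1) ∈ R₁ ↔ s(Sum.inr 0, Sum.inr 1) ∈ R₂) : R₁ = R₂ := by
  rcases h₁ with ⟨hN, rfl | rfl⟩ | ⟨hN, rfl⟩ <;> rcases h₂ with ⟨hN', rfl | rfl⟩ | ⟨hN', rfl⟩ <;>
    first | rfl | contradiction | simp [partA, partB] at h

theorem IsSquarePart.exists_notMem (hR : IsSquarePart u v N R) :
    ∃ t ∈ extraEdges v, t ∉ R ∧ ∀ R', IsSquarePart u v N R' → t ∉ R' → R' = R := by
  rcases hR with ⟨hN, rfl | rfl⟩ | ⟨hN, rfl⟩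
  · refine ⟨s(Sum.inr 0, Sum.inr 3), by simp [extraEdges], by simp [partA], ?_⟩
    rintro R' (⟨-, rfl | rfl⟩ | ⟨hN', -⟩) ht
    · rfl
    · simp [partB] at ht
    · contradiction
  all_goals
    refine ⟨s(Sum.inr 0, Sum.inr 1), by simp [extraEdges], by simp [partB, partC], ?_⟩
    rintro R' (⟨hN', rfl | rfl⟩ | ⟨hN', rfl⟩) ht <;>
      first | rfl | contradiction | simp [partA] at ht

theorem exists_isSquarePart_of_mem_iff (h : s(u, v) ∈ N₁ ↔ s(u, v) ∈ N₂) :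
    ∃ R, IsSquarePart u v N₁ R ∧ IsSquarePart u v N₂ R := by
  by_cases h₁ : s(u, v) ∈ N₁
  · exact ⟨partC v, Or.inr ⟨h₁, rfl⟩, Or.inr ⟨h.1 h₁, rfl⟩⟩
  · exact ⟨partA, Or.inl ⟨h₁, Or.inl rfl⟩, Or.inl ⟨h.not.1 h₁, Or.inl rfl⟩⟩

theorem preimage_lift (hR : R ⊆ extraEdges v) : liftEdge u v ⁻¹' lift u v N R = N := by
  ext f
  simp only [lift, Set.mem_preimage, Set.mem_union, liftEdge_injective.mem_set_image,
    or_iff_left fun h => liftEdge_notMem_extraEdges (hR h)]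

theorem lift_inter_extraEdges (hR : R ⊆ extraEdges v) : lift u v N R ∩ extraEdges v = R := by
  rw [lift, Set.union_inter_distrib_right, Set.inter_eq_left.2 hR, Set.union_eq_right]
  rintro _ ⟨⟨f, -, rfl⟩, h⟩
  exact absurd h liftEdge_notMem_extraEdges

theorem lift_inj (hR₁ : R₁ ⊆ extraEdges v) (hR₂ : R₂ ⊆ extraEdges v) :
    lift u v N₁ R₁ = lift u v N₂ R₂ ↔ N₁ = N₂ ∧ R₁ = R₂ := by
  refine ⟨fun h => ⟨?_, ?_⟩, fun ⟨h₁, h₂⟩ => h₁ ▸ h₂ ▸ rfl⟩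
  · rw [← preimage_lift (u := u) (N := N₁) hR₁, h, preimage_lift hR₂]
  · rw [← lift_inter_extraEdges (u := u) (N := N₁) hR₁, h, lift_inter_extraEdges hR₂]

theorem mem_lift_iff_of_mem_extraEdges {t : Sym2 (V ⊕ Fin 4)} (ht : t ∈ extraEdges v) :
    t ∈ lift u v N R ↔ t ∈ R := by
  refine or_iff_right ?_
  rintro ⟨f, -, rfl⟩
  exact liftEdge_notMem_extraEdges ht

theorem inter_lift (S' : Set (Sym2 (V ⊕ Fin 4))) :
    S' ∩ lift u v N R = liftEdge u v '' (liftEdge u v ⁻¹' S' ∩ N) ∪ (S' ∩ R) := by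
  rw [lift, Set.inter_union_distrib_left, Set.inter_comm _ N, Set.image_inter_preimage,
    Set.inter_comm]

theorem disjoint_lift_iff :
    Disjoint (lift u v N R) S' ↔ Disjoint N (liftEdge u v ⁻¹' S') ∧ Disjoint R S' := by
  rw [lift, Set.disjoint_union_left, Set.disjoint_image_left]

theorem inter_subset_diff_range (hR : R ⊆ extraEdges v) :
    S' ∩ R ⊆ S' \ Set.range (liftEdge u v) := by
  rintro e ⟨he, heR⟩
  refine ⟨he, ?_⟩
  rintro ⟨f, rfl⟩
  exact liftEdge_notMem_extraEdges (hR heR)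

theorem ncard_lift_le : (lift u v S T).ncard ≤ S.ncard + T.ncard :=
  (Set.ncard_union_le _ _).trans_eq (by rw [Set.ncard_image_of_injective _ liftEdge_injective])

theorem lift_subset_edgeSet (huv : G.Adj u v) (hS : S ⊆ G.edgeSet) (hT : T ⊆ extraEdges v) :
    lift u v S T ⊆ (addSquare G u v).edgeSet := by
  rw [edgeSet_addSquare huv]
  exact Set.union_subset_union (Set.image_mono hS) hT

theorem preimage_subset_edgeSet (huv : G.Adj u v) (hS' : S' ⊆ (addSquare G u v).edgeSet) :
    liftEdge u v ⁻¹' S' ⊆ G.edgeSet :=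
  fun _ hf => (liftEdge_mem_edgeSet_iff huv).1 (hS' hf)

theorem IsSquarePart.eq_of_mem (hR : IsSquarePart u v N R) {r₁ r₂ : Sym2 (V ⊕ Fin 4)}
    {w : V ⊕ Fin 4} (h₁ : r₁ ∈ R) (h₂ : r₂ ∈ R) (hw₁ : w ∈ r₁) (hw₂ : w ∈ r₂) : r₁ = r₂ := by
  rcases hR with ⟨-, rfl | rfl⟩ | ⟨-, rfl⟩ <;>
    simp only [partA, partB, partC, Set.mem_insert_iff, Set.mem_singleton_iff] at h₁ h₂ <;>
    rcases h₁ with rfl | rfl <;> rcases h₂ with rfl | rfl <;> simp_all <;>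
    rcases hw₁ with rfl | rfl <;> simp_all

theorem IsSquarePart.exists_mem_inr (hR : IsSquarePart u v N R) {i : Fin 4}
    (hi : s(u, v) ∈ N → i ≠ 0) : ∃ r ∈ R, Sum.inr i ∈ r := by
  rcases hR with ⟨-, rfl | rfl⟩ | ⟨h, rfl⟩ <;> fin_cases i <;> simp_all [partA, partB, partC]

theorem IsSquarePart.of_inl_mem (hR : IsSquarePart u v N R) {r : Sym2 (V ⊕ Fin 4)} (hr : r ∈ R)
    (hx : Sum.inl x ∈ r) : s(u, v) ∈ N ∧ x = v ∧ r = s(Sum.inr 3, Sum.inl v) := by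
  rcases hR with ⟨-, rfl | rfl⟩ | ⟨h, rfl⟩ <;>
    simp only [partA, partB, partC, Set.mem_insert_iff, Set.mem_singleton_iff] at hr <;>
    rcases hr with rfl | rfl <;> simp_all

theorem IsSquarePart.exists_mem_lift_inl (hR : IsSquarePart u v N R) (hf : f ∈ N) (hx : x ∈ f) :
    ∃ e ∈ lift u v N R, Sum.inl x ∈ e ∧
      (e = liftEdge u v f ∨ f = s(u, v) ∧ e = s(Sum.inr 3, Sum.inl v)) := by
  by_cases hfx : f = s(u, v) → x = u
  · exact ⟨_, Or.inl ⟨f, hf, rfl⟩, inl_mem_liftEdge.2 ⟨hx, hfx⟩, Or.inl rfl⟩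
  push Not at hfx
  obtain ⟨rfl, hxu⟩ := hfx
  obtain rfl : x = v := by simpa [hxu] using hx
  rcases hR with ⟨h, -⟩ | ⟨-, rfl⟩
  · exact absurd hf h
  · exact ⟨_, Or.inr (by simp [partC]), by simp, Or.inr ⟨rfl, rfl⟩⟩

theorem eq_of_mem_liftEdge (hN : IsPM G N) (h₁ : f₁ ∈ N) (h₂ : f₂ ∈ N) {w : V ⊕ Fin 4}
    (hw₁ : w ∈ liftEdge u v f₁) (hw₂ : w ∈ liftEdge u v f₂) : f₁ = f₂ := by
  rcases w with x | i
  · exact hN.eq_of_mem h₁ h₂ (inl_mem_liftEdge.1 hw₁).1 (inl_mem_liftEdge.1 hw₂).1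
  · exact (inr_mem_liftEdge.1 hw₁).1.trans (inr_mem_liftEdge.1 hw₂).1.symm

theorem IsSquarePart.notMem_of_mem_liftEdge (huv : u ≠ v) (hN : IsPM G N)
    (hR : IsSquarePart u v N R) (hf : f ∈ N) {r : Sym2 (V ⊕ Fin 4)} (hr : r ∈ R)
    {w : V ⊕ Fin 4} (hw : w ∈ liftEdge u v f) : w ∉ r := by
  intro hwr
  rcases w with x | i
  · obtain ⟨huvN, rfl, -⟩ := hR.of_inl_mem hr hwr
    obtain ⟨hvf, hfu⟩ := inl_mem_liftEdge.1 hw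
    exact huv (hfu (hN.eq_of_mem hf huvN hvf (Sym2.mem_mk_right u x))).symm
  · obtain ⟨rfl, rfl⟩ := inr_mem_liftEdge.1 hw
    rcases hR with ⟨h, -⟩ | ⟨-, rfl⟩
    · exact h hf
    · simp only [partC, Set.mem_insert_iff, Set.mem_singleton_iff] at hr
      rcases hr with rfl | rfl <;> simp at hwr

theorem isPM_lift (huv : G.Adj u v) (hN : IsPM G N) (hR : IsSquarePart u v N R) :
    IsPM (addSquare G u v) (lift u v N R) := by
  refine isPM_iff.2 ⟨lift_subset_edgeSet huv hN.1 hR.subset_extraEdges, ?_, ?_⟩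
  · rintro (x | i)
    · obtain ⟨f, hf, hx⟩ := hN.exists_mem x
      obtain ⟨e, he, hxe, -⟩ := hR.exists_mem_lift_inl hf hx
      exact ⟨e, he, hxe⟩
    · by_cases hi : s(u, v) ∈ N ∧ i = 0
      · exact ⟨_, Or.inl ⟨_, hi.1, rfl⟩, inr_mem_liftEdge.2 ⟨rfl, hi.2⟩⟩
      · obtain ⟨r, hr, hir⟩ := hR.exists_mem_inr fun h => not_and.1 hi h
        exact ⟨r, Or.inr hr, hir⟩
  · rintro _ (⟨f₁, hf₁, rfl⟩ | hr₁) _ (⟨f₂, hf₂, rfl⟩ | hr₂) w hw₁ hw₂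
    · rw [eq_of_mem_liftEdge hN hf₁ hf₂ hw₁ hw₂]
    · exact absurd hw₂ (hR.notMem_of_mem_liftEdge huv.ne hN hf₁ hr₂ hw₁)
    · exact absurd hw₁ (hR.notMem_of_mem_liftEdge huv.ne hN hf₂ hr₁ hw₂)
    · exact hR.eq_of_mem hr₁ hr₂ hw₁ hw₂

theorem eq_or_mem_extraEdges_of_inr_mem (huv : G.Adj u v) {e : Sym2 (V ⊕ Fin 4)} {i : Fin 4}
    (he : e ∈ (addSquare G u v).edgeSet) (hi : Sum.inr i ∈ e) :
    e = s(Sum.inl u, Sum.inr 0) ∨ e ∈ extraEdges v := by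
  rw [edgeSet_addSquare huv] at he
  rcases he with ⟨f, -, rfl⟩ | he
  · exact Or.inl ((inr_mem_liftEdge.1 hi).1 ▸ liftEdge_self)
  · exact Or.inr he

theorem square_covered (huv : G.Adj u v) (hM' : IsPM (addSquare G u v) M') :
    (s(Sum.inl u, Sum.inr 0) ∈ M' ∨ s(Sum.inr 0, Sum.inr 1) ∈ M' ∨
      s(Sum.inr 0, Sum.inr 3) ∈ M') ∧
    (s(Sum.inr 0, Sum.inr 1) ∈ M' ∨ s(Sum.inr 1, Sum.inr 2) ∈ M') ∧
    (s(Sum.inr 1, Sum.inr 2) ∈ M' ∨ s(Sum.inr 2, Sum.inr 3) ∈ M') ∧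
    (s(Sum.inr 2, Sum.inr 3) ∈ M' ∨ s(Sum.inr 3, Sum.inl v) ∈ M' ∨
      s(Sum.inr 0, Sum.inr 3) ∈ M') := by
  have cover : ∀ i : Fin 4, ∃ e ∈ M', Sum.inr i ∈ e ∧
      (e = s(Sum.inl u, Sum.inr 0) ∨ e ∈ extraEdges v) := fun i => by
    obtain ⟨e, he, hi⟩ := hM'.exists_mem (Sum.inr i)
    exact ⟨e, he, hi, eq_or_mem_extraEdges_of_inr_mem huv (hM'.1 he) hi⟩
  refine ⟨?_, ?_, ?_, ?_⟩
  · obtain ⟨e, he, hi, h | h | h | h | h | h⟩ := cover 0 <;> subst h <;> simp at hi <;> tauto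
  · obtain ⟨e, he, hi, h | h | h | h | h | h⟩ := cover 1 <;> subst h <;> simp at hi <;> tauto
  · obtain ⟨e, he, hi, h | h | h | h | h | h⟩ := cover 2 <;> subst h <;> simp at hi <;> tauto
  · obtain ⟨e, he, hi, h | h | h | h | h | h⟩ := cover 3 <;> subst h <;> simp at hi <;> tauto

theorem isSquarePart_inter_extraEdges (huv : G.Adj u v) (hM' : IsPM (addSquare G u v) M') :
    IsSquarePart u v (liftEdge u v ⁻¹' M') (M' ∩ extraEdges v) := by
  obtain ⟨c0, c1, c2, c3⟩ := square_covered huv hM'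
  have huvN : s(u, v) ∈ liftEdge u v ⁻¹' M' ↔ s(Sum.inl u, Sum.inr 0) ∈ M' := by
    rw [Set.mem_preimage, liftEdge_self]
  have hR : ∀ {R}, R ⊆ extraEdges v → (∀ e ∈ extraEdges v, e ∈ M' ↔ e ∈ R) →
      M' ∩ extraEdges v = R := fun hR h =>
    Set.ext fun e => ⟨fun he => (h e he.2).1 he.1, fun he => ⟨(h e (hR he)).2 he, hR he⟩⟩
  -- `hᵢ` is about the `i`-th edge of `uw₁, w₁w₂, w₂w₃, w₃w₄, w₄v, w₁w₄`, and `cᵢ` covers `wᵢ₊₁`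
  rcases c1 with h1 | h2
  · have h0 : s(Sum.inl u, Sum.inr 0) ∉ M' :=
      hM'.notMem_of_mem h1 (w := Sum.inr 0) (by simp) (by simp) (by simp)
    have h2 : s(Sum.inr 1, Sum.inr 2) ∉ M' :=
      hM'.notMem_of_mem h1 (w := Sum.inr 1) (by simp) (by simp) (by simp)
    have h5 : s(Sum.inr 0, Sum.inr 3) ∉ M' :=
      hM'.notMem_of_mem h1 (w := Sum.inr 0) (by simp) (by simp) (by simp)
    have h3 := c2.resolve_left h2
    have h4 : s(Sum.inr 3, Sum.inl v) ∉ M' :=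
      hM'.notMem_of_mem h3 (w := Sum.inr 3) (by simp) (by simp) (by simp)
    refine Or.inl ⟨huvN.not.2 h0, Or.inl (hR partA_subset_extraEdges ?_)⟩
    simp [extraEdges, partA, h1, h2, h3, h4, h5]
  have h1 : s(Sum.inr 0, Sum.inr 1) ∉ M' :=
    hM'.notMem_of_mem h2 (w := Sum.inr 1) (by simp) (by simp) (by simp)
  have h3 : s(Sum.inr 2, Sum.inr 3) ∉ M' :=
    hM'.notMem_of_mem h2 (w := Sum.inr 2) (by simp) (by simp) (by simp)
  rcases c0 with h0 | h1' | h5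
  · have h5 : s(Sum.inr 0, Sum.inr 3) ∉ M' :=
      hM'.notMem_of_mem h0 (w := Sum.inr 0) (by simp) (by simp) (by simp)
    have h4 := (c3.resolve_left h3).resolve_right h5
    refine Or.inr ⟨huvN.2 h0, hR partC_subset_extraEdges ?_⟩
    simp [extraEdges, partC, h1, h2, h3, h4, h5]
  · exact absurd h1' h1
  · have h0 : s(Sum.inl u, Sum.inr 0) ∉ M' :=
      hM'.notMem_of_mem h5 (w := Sum.inr 0) (by simp) (by simp) (by simp)
    have h4 : s(Sum.inr 3, Sum.inl v) ∉ M' :=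
      hM'.notMem_of_mem h5 (w := Sum.inr 3) (by simp) (by simp) (by simp)
    refine Or.inl ⟨huvN.not.2 h0, Or.inr (hR partB_subset_extraEdges ?_)⟩
    simp [extraEdges, partB, h1, h2, h3, h4, h5]

theorem isPM_of_isPM_lift (huv : G.Adj u v) (hM : IsPM (addSquare G u v) (lift u v N R))
    (hR : IsSquarePart u v N R) : IsPM G N := by
  refine isPM_iff.2 ⟨fun f hf => ?_, fun x => ?_, fun f₁ hf₁ f₂ hf₂ x hx₁ hx₂ => ?_⟩
  · exact (liftEdge_mem_edgeSet_iff huv).1 (hM.1 (Or.inl ⟨f, hf, rfl⟩))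
  · obtain ⟨e, he, hxe⟩ := hM.exists_mem (Sum.inl x)
    rcases he with ⟨f, hf, rfl⟩ | hr
    · exact ⟨f, hf, (inl_mem_liftEdge.1 hxe).1⟩
    · obtain ⟨huvN, rfl, -⟩ := hR.of_inl_mem hr hxe
      exact ⟨_, huvN, Sym2.mem_mk_right u x⟩
  obtain ⟨e₁, he₁, hxe₁, h₁⟩ := hR.exists_mem_lift_inl hf₁ hx₁
  obtain ⟨e₂, he₂, hxe₂, h₂⟩ := hR.exists_mem_lift_inl hf₂ hx₂
  have he := hM.eq_of_mem he₁ he₂ hxe₁ hxe₂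
  have hne : ∀ f, liftEdge u v f ≠ s(Sum.inr 3, Sum.inl v) := fun f h =>
    liftEdge_notMem_extraEdges (by rw [h]; simp [extraEdges])
  rcases h₁ with rfl | ⟨rfl, rfl⟩ <;> rcases h₂ with rfl | ⟨rfl, rfl⟩
  · exact liftEdge_injective he
  · exact absurd he (hne f₁)
  · exact absurd he.symm (hne f₂)
  · rfl

theorem eq_lift_preimage (huv : G.Adj u v) (hM' : M' ⊆ (addSquare G u v).edgeSet) :
    M' = lift u v (liftEdge u v ⁻¹' M') (M' ∩ extraEdges v) := by
  rw [lift, Set.image_preimage_eq_inter_range, ← Set.inter_union_distrib_left,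
    Set.inter_eq_left.2]
  rw [edgeSet_addSquare huv] at hM'
  exact hM'.trans (Set.union_subset_union (Set.image_subset_range _ _) subset_rfl)

theorem exists_eq_lift (huv : G.Adj u v) (hM' : IsPM (addSquare G u v) M') :
    ∃ N R, IsPM G N ∧ IsSquarePart u v N R ∧ M' = lift u v N R := by
  have hR := isSquarePart_inter_extraEdges huv hM'
  have hM'_eq := eq_lift_preimage huv hM'.1
  exact ⟨_, _, isPM_of_isPM_lift huv (hM'_eq ▸ hM') hR, hR, hM'_eq⟩

theorem gf_addSquare_le (huv : G.Adj u v) : gf (addSquare G u v) ≤ gf G + 1 := by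
  obtain ⟨S, hS, hcard⟩ := exists_isGlobalForcingSet_ncard_eq_gf G
  have ht : {s(Sum.inr 0, Sum.inr 1)} ⊆ extraEdges v := by simp [extraEdges]
  have hGFS : IsGlobalForcingSet (addSquare G u v) (lift u v S {s(Sum.inr 0, Sum.inr 1)}) := by
    refine ⟨lift_subset_edgeSet huv hS.1 ht, fun M₁ M₂ h₁ h₂ hne heq => hne ?_⟩
    obtain ⟨N₁, R₁, hN₁, hR₁, rfl⟩ := exists_eq_lift huv h₁
    obtain ⟨N₂, R₂, hN₂, hR₂, rfl⟩ := exists_eq_lift huv h₂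
    obtain rfl : N₁ = N₂ := by
      by_contra hN
      refine hS.2 N₁ N₂ hN₁ hN₂ hN ?_
      simpa only [Set.preimage_inter, preimage_lift ht, preimage_lift hR₁.subset_extraEdges,
        preimage_lift hR₂.subset_extraEdges] using congrArg (liftEdge u v ⁻¹' ·) heq
    have h01 := Set.ext_iff.1 heq s(Sum.inr 0, Sum.inr 1)
    simp only [Set.mem_inter_iff, mem_lift_iff_of_mem_extraEdges (ht rfl)] at h01
    rw [hR₁.eq_of_mem_iff hR₂ (by simpa using h01)]
  calc gf (addSquare G u v) ≤ _ := gf_le_ncard hGFS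
    _ ≤ S.ncard + 1 := ncard_lift_le.trans_eq (by rw [Set.ncard_singleton])
    _ = gf G + 1 := by rw [hcard]

theorem Af_addSquare_le [Finite V] (huv : G.Adj u v) : Af (addSquare G u v) ≤ Af G + 1 := by
  refine Af_le fun M' hM' => ?_
  obtain ⟨N, R, hN, hR, rfl⟩ := exists_eq_lift huv hM'
  obtain ⟨S, hS, hcard⟩ := exists_isAntiForcingSet_ncard_eq_af hN
  obtain ⟨hSE, -, hSN, hSuniq⟩ := isAntiForcingSet_iff.1 hS
  obtain ⟨t, ht, htR, htuniq⟩ := hR.exists_notMem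
  have ht' : {t} ⊆ extraEdges v := Set.singleton_subset_iff.2 ht
  have hAFS : IsAntiForcingSet (addSquare G u v) (lift u v N R) (lift u v S {t}) := by
    refine isAntiForcingSet_iff.2 ⟨lift_subset_edgeSet huv hSE ht', isPM_lift huv hN hR, ?_, ?_⟩
    · rw [disjoint_lift_iff, preimage_lift hR.subset_extraEdges, Set.disjoint_singleton_left,
        mem_lift_iff_of_mem_extraEdges ht]
      exact ⟨hSN, htR⟩
    · intro M'' hM'' hdisj
      obtain ⟨N'', R'', hN'', hR'', rfl⟩ := exists_eq_lift huv hM''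
      rw [disjoint_lift_iff, preimage_lift ht'] at hdisj
      obtain rfl := hSuniq N'' hN'' hdisj.1
      rw [htuniq R'' hR'' fun h => Set.disjoint_left.1 hdisj.2 h (Or.inr rfl)]
  calc af (addSquare G u v) (lift u v N R) ≤ _ := af_le_ncard hAFS
    _ ≤ S.ncard + 1 := ncard_lift_le.trans_eq (by rw [Set.ncard_singleton])
    _ ≤ Af G + 1 := by rw [hcard]; exact Nat.add_le_add_right (af_le_Af hN) 1

theorem inter_ne_of_isGlobalForcingSet (huv : G.Adj u v)
    (hS' : IsGlobalForcingSet (addSquare G u v) S') (h₁ : IsPM G N₁) (h₂ : IsPM G N₂)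
    (hR₁ : IsSquarePart u v N₁ R₁) (hR₂ : IsSquarePart u v N₂ R₂)
    (hne : lift u v N₁ R₁ ≠ lift u v N₂ R₂)
    (h₀ : liftEdge u v ⁻¹' S' ∩ N₁ = liftEdge u v ⁻¹' S' ∩ N₂) : S' ∩ R₁ ≠ S' ∩ R₂ := fun h =>
  hS'.2 _ _ (isPM_lift huv h₁ hR₁) (isPM_lift huv h₂ hR₂) hne
    (by rw [inter_lift, inter_lift, h₀, h])

theorem eq_of_preimage_inter_eq (huv : G.Adj u v)
    (hS' : IsGlobalForcingSet (addSquare G u v) S') (h₁ : IsPM G N₁) (h₂ : IsPM G N₂)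
    (h₀ : liftEdge u v ⁻¹' S' ∩ N₁ = liftEdge u v ⁻¹' S' ∩ N₂)
    (huvN : s(u, v) ∈ N₁ ↔ s(u, v) ∈ N₂) : N₁ = N₂ := by
  obtain ⟨R, hR₁, hR₂⟩ := exists_isSquarePart_of_mem_iff huvN
  by_contra hne
  refine inter_ne_of_isGlobalForcingSet huv hS' h₁ h₂ hR₁ hR₂ (fun h => hne ?_) h₀ rfl
  exact ((lift_inj hR₁.subset_extraEdges hR₂.subset_extraEdges).1 h).1

theorem isGlobalForcingSet_insert_preimage (huv : G.Adj u v)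
    (hS' : IsGlobalForcingSet (addSquare G u v) S') :
    IsGlobalForcingSet G (insert s(u, v) (liftEdge u v ⁻¹' S')) := by
  refine ⟨Set.insert_subset huv (preimage_subset_edgeSet huv hS'.1),
    fun N₁ N₂ h₁ h₂ hne h => hne (eq_of_preimage_inter_eq huv hS' h₁ h₂ ?_ ?_)⟩
  · simpa only [← Set.inter_assoc, Set.inter_eq_left.2 (Set.subset_insert _ _)] using
      congrArg (liftEdge u v ⁻¹' S' ∩ ·) h
  · simpa using Set.ext_iff.1 h s(u, v)

theorem ncard_pos_diff_range_of_isGlobalForcingSet [Finite V] (huv : G.Adj u v)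
    (hS' : IsGlobalForcingSet (addSquare G u v) S') (hM : IsPM G M) (heM : s(u, v) ∉ M) :
    0 < (S' \ Set.range (liftEdge u v)).ncard := by
  have hA : IsSquarePart u v M partA := Or.inl ⟨heM, Or.inl rfl⟩
  have hB : IsSquarePart u v M partB := Or.inl ⟨heM, Or.inr rfl⟩
  refine Set.ncard_pos_of_ne (Set.toFinite _) (inter_subset_diff_range hA.subset_extraEdges)
    (inter_subset_diff_range hB.subset_extraEdges)
    (inter_ne_of_isGlobalForcingSet huv hS' hM hM hA hB (fun h => partA_ne_partB (V := V) ?_) rfl)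
  exact ((lift_inj hA.subset_extraEdges hB.subset_extraEdges).1 h).2

theorem two_le_ncard_diff_range_of_isGlobalForcingSet [Finite V] (huv : G.Adj u v)
    (hS' : IsGlobalForcingSet (addSquare G u v) S')
    (hS₀ : ¬IsGlobalForcingSet G (liftEdge u v ⁻¹' S')) :
    2 ≤ (S' \ Set.range (liftEdge u v)).ncard := by
  obtain ⟨N₁, N₂, h₁, h₂, hne, h₀⟩ : ∃ N₁ N₂, IsPM G N₁ ∧ IsPM G N₂ ∧ N₁ ≠ N₂ ∧
      liftEdge u v ⁻¹' S' ∩ N₁ = liftEdge u v ⁻¹' S' ∩ N₂ := by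
    by_contra! h
    exact hS₀ ⟨preimage_subset_edgeSet huv hS'.1, h⟩
  have huvN : ¬(s(u, v) ∈ N₁ ↔ s(u, v) ∈ N₂) := fun h =>
    hne (eq_of_preimage_inter_eq huv hS' h₁ h₂ h₀ h)
  wlog huvN₁ : s(u, v) ∉ N₁ generalizing N₁ N₂
  · exact this N₂ N₁ h₂ h₁ (Ne.symm hne) h₀.symm (fun h => huvN h.symm) (by tauto)
  have hA : IsSquarePart u v N₁ partA := Or.inl ⟨huvN₁, Or.inl rfl⟩
  have hB : IsSquarePart u v N₁ partB := Or.inl ⟨huvN₁, Or.inr rfl⟩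
  have hC : IsSquarePart u v N₂ (partC v) := Or.inr ⟨by tauto, rfl⟩
  have hlift : ∀ {R₁ R₂}, IsSquarePart u v N₁ R₁ → IsSquarePart u v N₂ R₂ →
      lift u v N₁ R₁ ≠ lift u v N₂ R₂ := fun hR₁ hR₂ h =>
    hne ((lift_inj hR₁.subset_extraEdges hR₂.subset_extraEdges).1 h).1
  refine Set.two_le_ncard_of_pairwise_ne (Set.toFinite _)
    (inter_subset_diff_range hA.subset_extraEdges) (inter_subset_diff_range hB.subset_extraEdges)
    (inter_subset_diff_range hC.subset_extraEdges)
    (inter_ne_of_isGlobalForcingSet huv hS' h₁ h₁ hA hB (fun h => partA_ne_partB (V := V) ?_) rfl)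
    (inter_ne_of_isGlobalForcingSet huv hS' h₁ h₂ hA hC (hlift hA hC) h₀)
    (inter_ne_of_isGlobalForcingSet huv hS' h₁ h₂ hB hC (hlift hB hC) h₀)
  exact ((lift_inj hA.subset_extraEdges hB.subset_extraEdges).1 h).2

theorem gf_add_one_le_gf_addSquare [Finite V] (huv : G.Adj u v) (hM : IsPM G M)
    (heM : s(u, v) ∉ M) : gf G + 1 ≤ gf (addSquare G u v) := by
  obtain ⟨S', hS', hcard⟩ := exists_isGlobalForcingSet_ncard_eq_gf (addSquare G u v)
  rw [← hcard, Set.ncard_eq_ncard_preimage_add_ncard_diff_range (g := liftEdge u v)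
    liftEdge_injective (Set.toFinite S')]
  by_cases hS₀ : IsGlobalForcingSet G (liftEdge u v ⁻¹' S')
  · have := gf_le_ncard hS₀
    have := ncard_pos_diff_range_of_isGlobalForcingSet huv hS' hM heM
    omega
  · have := (gf_le_ncard (isGlobalForcingSet_insert_preimage huv hS')).trans
      (Set.ncard_insert_le _ _)
    have := two_le_ncard_diff_range_of_isGlobalForcingSet huv hS' hS₀
    omega

theorem eq_of_disjoint_of_isAntiForcingSet (huv : G.Adj u v)
    (hS' : IsAntiForcingSet (addSquare G u v) (lift u v M partB) S') (hN : IsPM G N)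
    (hR : IsSquarePart u v N R) (hNS : Disjoint N (liftEdge u v ⁻¹' S')) (hRS : Disjoint R S') :
    N = M ∧ R = partB :=
  (lift_inj hR.subset_extraEdges partB_subset_extraEdges).1 <|
    (isAntiForcingSet_iff.1 hS').2.2.2 _ (isPM_lift huv hN hR) (disjoint_lift_iff.2 ⟨hNS, hRS⟩)

theorem isAntiForcingSet_insert_preimage (huv : G.Adj u v) (hM : IsPM G M) (heM : s(u, v) ∉ M)
    (hS' : IsAntiForcingSet (addSquare G u v) (lift u v M partB) S') :
    IsAntiForcingSet G M (insert s(u, v) (liftEdge u v ⁻¹' S')) := by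
  obtain ⟨hS'E, -, hS'M, -⟩ := isAntiForcingSet_iff.1 hS'
  obtain ⟨hMS, hBS⟩ := disjoint_lift_iff.1 hS'M.symm
  refine isAntiForcingSet_iff.2 ⟨Set.insert_subset huv (preimage_subset_edgeSet huv hS'E), hM,
    Set.disjoint_insert_left.2 ⟨heM, hMS.symm⟩, fun N hN hNS => ?_⟩
  rw [Set.disjoint_insert_right] at hNS
  exact (eq_of_disjoint_of_isAntiForcingSet huv hS' hN (Or.inl ⟨hNS.1, Or.inr rfl⟩) hNS.2 hBS).1

theorem not_disjoint_partA (huv : G.Adj u v) (hM : IsPM G M) (heM : s(u, v) ∉ M)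
    (hS' : IsAntiForcingSet (addSquare G u v) (lift u v M partB) S') : ¬Disjoint partA S' :=
  fun h => partA_ne_partB (V := V) (eq_of_disjoint_of_isAntiForcingSet huv hS' hM
    (Or.inl ⟨heM, Or.inl rfl⟩) (disjoint_lift_iff.1 (isAntiForcingSet_iff.1 hS').2.2.1.symm).1 h).2

theorem ncard_pos_diff_range_of_isAntiForcingSet [Finite V] (huv : G.Adj u v) (hM : IsPM G M)
    (heM : s(u, v) ∉ M) (hS' : IsAntiForcingSet (addSquare G u v) (lift u v M partB) S') :
    0 < (S' \ Set.range (liftEdge u v)).ncard := by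
  obtain ⟨a, haA, haS⟩ := Set.not_disjoint_iff.1 (not_disjoint_partA huv hM heM hS')
  exact (Set.ncard_pos (Set.toFinite _)).2
    ⟨a, inter_subset_diff_range partA_subset_extraEdges ⟨haS, haA⟩⟩

theorem two_le_ncard_diff_range_of_isAntiForcingSet [Finite V] (huv : G.Adj u v) (hM : IsPM G M)
    (heM : s(u, v) ∉ M) (hS' : IsAntiForcingSet (addSquare G u v) (lift u v M partB) S')
    (hS₀ : ¬IsAntiForcingSet G M (liftEdge u v ⁻¹' S')) :
    2 ≤ (S' \ Set.range (liftEdge u v)).ncard := by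
  obtain ⟨hS'E, -, hS'M, -⟩ := isAntiForcingSet_iff.1 hS'
  obtain ⟨hMS, hBS⟩ := disjoint_lift_iff.1 hS'M.symm
  obtain ⟨N, hN, hNS, hNM⟩ : ∃ N, IsPM G N ∧ Disjoint N (liftEdge u v ⁻¹' S') ∧ N ≠ M := by
    by_contra! h
    exact hS₀ (isAntiForcingSet_iff.2 ⟨preimage_subset_edgeSet huv hS'E, hM, hMS.symm, h⟩)
  have huvN : s(u, v) ∈ N := by
    by_contra huvN
    exact hNM (eq_of_disjoint_of_isAntiForcingSet huv hS' hN (Or.inl ⟨huvN, Or.inr rfl⟩) hNS hBS).1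
  have hCS : ¬Disjoint (partC v) S' := fun h =>
    hNM (eq_of_disjoint_of_isAntiForcingSet huv hS' hN (Or.inr ⟨huvN, rfl⟩) hNS h).1
  obtain ⟨a, haA, haS⟩ := Set.not_disjoint_iff.1 (not_disjoint_partA huv hM heM hS')
  obtain ⟨c, hcC, hcS⟩ := Set.not_disjoint_iff.1 hCS
  refine (Set.one_lt_ncard_iff (Set.toFinite _)).2 ⟨a, c,
    inter_subset_diff_range partA_subset_extraEdges ⟨haS, haA⟩,
    inter_subset_diff_range partC_subset_extraEdges ⟨hcS, hcC⟩, ?_⟩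
  rintro rfl
  exact Set.disjoint_left.1 disjoint_partA_partC haA hcC

theorem af_add_one_le_Af_addSquare [Finite V] (huv : G.Adj u v) (hM : IsPM G M)
    (heM : s(u, v) ∉ M) : af G M + 1 ≤ Af (addSquare G u v) := by
  have hMB := isPM_lift huv hM (Or.inl ⟨heM, Or.inr rfl⟩)
  refine le_trans ?_ (af_le_Af hMB)
  obtain ⟨S', hS', hcard⟩ := exists_isAntiForcingSet_ncard_eq_af hMB
  rw [← hcard, Set.ncard_eq_ncard_preimage_add_ncard_diff_range (g := liftEdge u v)
    liftEdge_injective (Set.toFinite S')]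
  by_cases hS₀ : IsAntiForcingSet G M (liftEdge u v ⁻¹' S')
  · have := af_le_ncard hS₀
    have := ncard_pos_diff_range_of_isAntiForcingSet huv hM heM hS'
    omega
  · have := (af_le_ncard (isAntiForcingSet_insert_preimage huv hM heM hS')).trans
      (Set.ncard_insert_le _ _)
    have := two_le_ncard_diff_range_of_isAntiForcingSet huv hM heM hS' hS₀
    omega

end AddSquare

theorem statement_9_general {V : Type*} [Fintype V] (G : SimpleGraph V) (M : Set (Sym2 V))
    (hM : IsPM G M) (hmax : af G M = Af G)
    (u v : V) (huv : G.Adj u v) (heM : s(u, v) ∉ M) :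
    gf (addSquare G u v) = gf G + 1 ∧ Af (addSquare G u v) = Af G + 1 :=
  ⟨(AddSquare.gf_addSquare_le huv).antisymm (AddSquare.gf_add_one_le_gf_addSquare huv hM heM),
    (AddSquare.Af_addSquare_le huv).antisymm
      (hmax ▸ AddSquare.af_add_one_le_Af_addSquare huv hM heM)⟩

/-- Let `M` be a perfect matching of a connected graph `G` with `af(G,M) = Af(G)` and
let `e = uv` be an edge of `G` not in `M`. Then `gf(G_e) = gf(G) + 1` and
`Af(G_e) = Af(G) + 1`. -/
theorem statement_9 {V : Type*} [Fintype V] (G : SimpleGraph V) (M : Set (Sym2 V))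
    (hconn : G.Connected) (hM : IsPM G M) (hmax : af G M = Af G)
    (u v : V) (huv : G.Adj u v) (heM : s(u, v) ∉ M) :
    gf (addSquare G u v) = gf G + 1 ∧ Af (addSquare G u v) = Af G + 1 :=
  statement_9_general G M hM hmax u v huv heM
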